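/- For m ≤ n natural numbers and real d, the identity −(d)_m (d−1/2)_m / m! · (2d+2m−1)_{2n−2m+1} / (2n−2m+1)! = (1−2d) · (d)_n (d+1/2)_n / ((3/2)_n · n!) · (−n)_m (−n−1/2)_m / m! holds. -/

import Mathlib

/-- Pochhammer (rising factorial) for real `a`. -/
noncomputable def poch (a : ℝ) (n : ℕ) : ℝ := (ascPochhammer ℝ n).eval a

/-! Put `n = m + k`. The duplication formula `(2a)_{2k} = 4^k (a)_k (a + 1/2)_k` rewrites
`(2d + 2m - 1)_{2k+1}` and `(2k + 1)!` as products of symbols of length `k`, and the reflection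
`(-(x + m))_m = (-1)^m (x + 1)_m` turns `(-n)_m (-n - 1/2)_m` into `(k + 1)_m (k + 3/2)_m`, which
cancels against the same factors split off from `n!` and `(3/2)_n`. What is left is
`(d - 1/2)_m (2d + 2m - 1) = (2d - 1) (d + 1/2)_m`. -/

open Nat

lemma poch_succ_right (a : ℝ) (k : ℕ) : poch a (k + 1) = poch a k * (a + k) :=
  ascPochhammer_succ_eval k a

lemma poch_add (a : ℝ) (i j : ℕ) : poch a (i + j) = poch a i * poch (a + i) j := by
  simpa [poch, Polynomial.eval_comp] using
    (congrArg (Polynomial.eval a) (ascPochhammer_mul (S := ℝ) i j)).symm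

lemma poch_succ_left (a : ℝ) (k : ℕ) : poch a (k + 1) = a * poch (a + 1) k := by
  simpa [add_comm 1 k, poch] using poch_add a 1 k

lemma poch_mul_add_self (a : ℝ) (k : ℕ) : poch a k * (a + k) = a * poch (a + 1) k := by
  rw [← poch_succ_right, poch_succ_left]

lemma poch_sub_half_mul (a : ℝ) (m : ℕ) :
    poch (a - 1/2) m * (2 * (a + m) - 1) = (2 * a - 1) * poch (a + 1/2) m := by
  have := poch_mul_add_self (a - 1/2) m
  rw [show a - 1/2 + 1 = a + 1/2 by ring] at this
  linear_combination 2 * this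

lemma poch_pos {a : ℝ} (ha : 0 < a) (k : ℕ) : 0 < poch a k :=
  ascPochhammer_pos k a ha

lemma poch_neg_add (x : ℝ) (m : ℕ) : poch (-(x + m)) m = (-1) ^ m * poch (x + 1) m := by
  rw [poch, ascPochhammer_eval_neg_eq_descPochhammer, descPochhammer_eval_eq_ascPochhammer,
    add_sub_cancel_right, poch]

lemma poch_two_mul (a : ℝ) (k : ℕ) :
    poch (2 * a) (2 * k) = 4 ^ k * poch a k * poch (a + 1/2) k := by
  induction k with
  | zero => simp [poch]
  | succ k ih =>
    rw [show 2 * (k + 1) = 2 * k + 1 + 1 by ring]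
    simp only [poch_succ_right, ih]
    push_cast
    ring

lemma poch_two_mul_sub_one (a : ℝ) (k : ℕ) :
    poch (2 * a - 1) (2 * k + 1) = (2 * a - 1) * (4 ^ k * poch a k * poch (a + 1/2) k) := by
  rw [poch_succ_left, sub_add_cancel, poch_two_mul]

lemma poch_one_eq_factorial (k : ℕ) : poch 1 k = k ! := by
  simp [poch]

lemma factorial_add_eq_factorial_mul_poch (m k : ℕ) :
    ((m + k)! : ℝ) = k ! * poch (k + 1) m := by
  rw [add_comm, poch, ← factorial_mul_ascPochhammer]

lemma factorial_two_mul_add_one (k : ℕ) : ((2 * k + 1)! : ℝ) = 4 ^ k * k ! * poch (3/2) k := by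
  rw [← poch_one_eq_factorial, poch_succ_left, show (1 : ℝ) + 1 = 2 * 1 by norm_num,
    poch_two_mul, poch_one_eq_factorial]
  norm_num

/-- `-(d)_m (d-1/2)_m / m! · (2d+2m-1)_{2n-2m+1} / (2n-2m+1)!
  = (1-2d) (d)_n (d+1/2)_n / ((3/2)_n n!) · (-n)_m (-n-1/2)_m / m!` for `m ≤ n`. -/
theorem stmt8 (d : ℝ) (m n : ℕ) (h : m ≤ n) :
    -(poch d m * poch (d - 1/2) m / m.factorial)
        * (poch (2 * d + 2 * m - 1) (2 * n - 2 * m + 1) / (2 * n - 2 * m + 1).factorial)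
      = (1 - 2 * d) * (poch d n * poch (d + 1/2) n / (poch (3/2) n * n.factorial))
        * (poch (-(n : ℝ)) m * poch (-(n : ℝ) - 1/2) m / m.factorial) := by
  obtain ⟨k, rfl⟩ : ∃ k, n = m + k := ⟨n - m, by omega⟩
  have h32 : poch (3/2) (m + k) = poch (3/2) k * poch ((k + 1/2 : ℝ) + 1) m := by
    rw [add_comm m k, poch_add]; ring_nf
  have hneg : -((m + k : ℕ) : ℝ) = -((k : ℝ) + m) := by push_cast; ring
  have hneg' : -((m + k : ℕ) : ℝ) - 1/2 = -((k + 1/2 : ℝ) + m) := by push_cast; ring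
  have hhalf := poch_sub_half_mul d m
  rw [show 2 * (m + k) - 2 * m + 1 = 2 * k + 1 by omega,
    show 2 * d + 2 * m - 1 = 2 * (d + m) - 1 by ring, poch_two_mul_sub_one,
    factorial_two_mul_add_one, factorial_add_eq_factorial_mul_poch, poch_add d, poch_add (d + 1/2),
    h32, hneg', hneg, poch_neg_add, poch_neg_add, show d + 1/2 + m = d + m + 1/2 by ring]
  have hF := poch_pos (show (0 : ℝ) < 3/2 by norm_num) k
  have hH := poch_pos (show (0 : ℝ) < k + 1 by positivity) m
  have hG := poch_pos (show (0 : ℝ) < k + 1/2 + 1 by positivity) m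
  -- `field_simp` would normalise the arguments of these symbols and lose track of `hhalf`, `hG`
  generalize poch (d - 1/2) m = B, poch (d + 1/2) m = E, poch (d + m + 1/2) k = D,
    poch (k + 1/2 + 1) m = G at *
  have hsign : ((-1 : ℝ) ^ m) ^ 2 = 1 := by rw [sq, ← mul_pow]; norm_num
  field_simp
  linear_combination (-(poch d m * poch (d + m) k * D)) * hhalf
    - poch d m * poch (d + m) k * D * (1 - 2 * d) * E * hsign
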